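/- arXiv:2308.10374 — 4 statements merged into one kernel-verified Lean document; each statement's English description precedes it below -/
import Mathlib

section
/- Let (μ_α)_{α∈Λ} be a family of finitely sub-additive, non-negative set functions on a measurable space (S,Σ). Define μ̌(A) = sup over finite measurable partitions Π of A of Σ_{C∈Π} sup_{α∈Λ} μ_α(C). Then μ̌ is finitely additive, satisfies μ̌ ≥ μ_α for each α, and is the smallest finitely additive set function with this property. -/
open MeasureTheory Set
open scoped ENNReal NNReal

/-- The supremum set function of a family of set functions, defined on a set `A` as the
supremum over finite measurable partitions `Π` of `A` of `∑_{C ∈ Π} ⨆ α, μ α C`. -/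
noncomputable def partitionSup {S : Type*} [MeasurableSpace S] {Λ : Type*}
    (μ : Λ → Set S → ℝ≥0∞) (A : Set S) : ℝ≥0∞ :=
  ⨆ (P : Finset (Set S)) (_ : (∀ C ∈ P, MeasurableSet C) ∧
      (P : Set (Set S)).PairwiseDisjoint id ∧ ⋃₀ (P : Set (Set S)) = A),
    ∑ C ∈ P, ⨆ α, μ α C

/-- Summing a function vanishing at `∅` over the image of a map that is injective away
from `∅`. -/
lemma sum_image_aux {S : Type*} [DecidableEq (Set S)] {g : Set S → ℝ≥0∞} (hg : g ∅ = 0)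
    (R : Finset (Set S)) (e : Set S → Set S)
    (he : ∀ C ∈ R, ∀ C' ∈ R, e C = e C' → e C ≠ ∅ → C = C') :
    ∑ C ∈ R, g (e C) = ∑ D ∈ R.image e, g D := by
  classical
  set R' : Finset (Set S) := R.filter (fun C => e C ≠ ∅) with hR'
  have h1 : ∑ C ∈ R, g (e C) = ∑ C ∈ R', g (e C) := by
    refine (Finset.sum_subset (Finset.filter_subset _ _) ?_).symm
    intro C hC hC'
    have : e C = ∅ := by
      by_contra h
      exact hC' (Finset.mem_filter.2 ⟨hC, h⟩)
    rw [this, hg]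
  have h2 : ∑ C ∈ R', g (e C) = ∑ D ∈ R'.image e, g D := by
    refine (Finset.sum_image ?_).symm
    intro C hC C' hC' hee
    have hC1 := Finset.mem_filter.1 hC
    have hC'1 := Finset.mem_filter.1 hC'
    exact he C hC1.1 C' hC'1.1 hee hC1.2
  have h3 : ∑ D ∈ R'.image e, g D = ∑ D ∈ R.image e, g D := by
    refine Finset.sum_subset (Finset.image_subset_image (Finset.filter_subset _ _)) ?_
    intro D hD hD'
    obtain ⟨C, hC, rfl⟩ := Finset.mem_image.1 hD
    by_cases h : e C = ∅
    · rw [h, hg]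
    · exact absurd (Finset.mem_image.2 ⟨C, Finset.mem_filter.2 ⟨hC, h⟩, rfl⟩) hD'
  rw [h1, h2, h3]

/-- A finitely additive set function sums over finite measurable partitions. -/
lemma sum_partition_aux {S : Type*} [MeasurableSpace S] {ν : Set S → ℝ≥0∞}
    (h0 : ν ∅ = 0)
    (hadd : ∀ A B : Set S, MeasurableSet A → MeasurableSet B → Disjoint A B →
      ν (A ∪ B) = ν A + ν B)
    (P : Finset (Set S)) (hmeas : ∀ C ∈ P, MeasurableSet C)
    (hdis : (P : Set (Set S)).PairwiseDisjoint id) :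
    ν (⋃₀ (P : Set (Set S))) = ∑ C ∈ P, ν C := by
  classical
  revert hmeas hdis
  induction P using Finset.induction_on with
  | empty => intro _ _; simpa using h0
  | @insert C P hCP ih =>
      intro hmeas hdis
      have hmeasP : ∀ D ∈ P, MeasurableSet D := fun D hD =>
        hmeas D (Finset.mem_insert_of_mem hD)
      have hdisP : (P : Set (Set S)).PairwiseDisjoint id :=
        hdis.subset (by simp [Set.subset_insert])
      have hUmeas : MeasurableSet (⋃₀ (P : Set (Set S))) := by
        rw [Set.sUnion_eq_biUnion]
        exact MeasurableSet.biUnion (P.countable_toSet) (fun D hD => hmeasP D hD)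
      have hdisC : Disjoint C (⋃₀ (P : Set (Set S))) := by
        rw [Set.disjoint_sUnion_right]
        intro D hD
        have hne : C ≠ D := by rintro rfl; exact hCP hD
        exact hdis (by simp) (by simp [hD]) hne
      rw [Finset.coe_insert, Set.sUnion_insert,
        hadd C _ (hmeas C (Finset.mem_insert_self _ _)) hUmeas hdisC,
        Finset.sum_insert hCP, ih hmeasP hdisP]

/-- For a family of non-negative finitely sub-additive set functions `μ α` on a measurable
space, the set function `partitionSup μ` is finitely additive, dominates each `μ α`, and is
the smallest finitely additive set function with this property. -/
theorem stmt0 {S : Type*} [MeasurableSpace S] {Λ : Type*} (μ : Λ → Set S → ℝ≥0∞)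
    (hempty : ∀ α, μ α ∅ = 0)
    (hsub : ∀ α (A B : Set S), MeasurableSet A → MeasurableSet B → Disjoint A B →
      μ α (A ∪ B) ≤ μ α A + μ α B) :
    (∀ A B : Set S, MeasurableSet A → MeasurableSet B → Disjoint A B →
        partitionSup μ (A ∪ B) = partitionSup μ A + partitionSup μ B) ∧
    (∀ α (A : Set S), MeasurableSet A → μ α A ≤ partitionSup μ A) ∧
    (∀ ν : Set S → ℝ≥0∞, ν ∅ = 0 →
      (∀ A B : Set S, MeasurableSet A → MeasurableSet B → Disjoint A B →
        ν (A ∪ B) = ν A + ν B) →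
      (∀ α (A : Set S), MeasurableSet A → μ α A ≤ ν A) →
      ∀ A : Set S, MeasurableSet A → partitionSup μ A ≤ ν A) := by
  classical
  set f : Set S → ℝ≥0∞ := fun C => ⨆ α, μ α C with hf
  have hf0 : f ∅ = 0 := by
    simp [hf, hempty]
  -- the condition of being a partition
  set cond : Set S → Finset (Set S) → Prop := fun A P =>
    (∀ C ∈ P, MeasurableSet C) ∧
      (P : Set (Set S)).PairwiseDisjoint id ∧ ⋃₀ (P : Set (Set S)) = A with hcond
  have hPS : ∀ A : Set S, partitionSup μ A = ⨆ (P : Finset (Set S)) (_ : cond A P),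
      ∑ C ∈ P, f C := fun A => rfl
  -- the singleton partition
  have hsingle : ∀ A : Set S, MeasurableSet A → cond A {A} := by
    intro A hA
    refine ⟨by simpa using hA, ?_, by simp⟩
    simp [Set.pairwiseDisjoint_singleton]
  -- each μ α is dominated
  have hdom : ∀ α (A : Set S), MeasurableSet A → μ α A ≤ partitionSup μ A := by
    intro α A hA
    have h1 : μ α A ≤ ∑ C ∈ ({A} : Finset (Set S)), f C := by
      simp only [Finset.sum_singleton]
      exact le_iSup (fun α => μ α A) α
    exact h1.trans (le_iSup₂ (f := fun P _ => ∑ C ∈ P, f C) ({A} : Finset (Set S))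
      (hsingle A hA))
  refine ⟨?_, hdom, ?_⟩
  · -- finite additivity
    intro A B hA hB hAB
    apply le_antisymm
    · -- ≤ : split a partition of A ∪ B along A and B
      refine iSup₂_le ?_
      rintro R ⟨hRm, hRd, hRu⟩
      have hsubR : ∀ C ∈ R, C ⊆ A ∪ B := by
        intro C hC
        rw [← hRu]
        exact Set.subset_sUnion_of_mem hC
      -- pointwise subadditive bound
      have hptwise : ∀ C ∈ R, f C ≤ f (C ∩ A) + f (C ∩ B) := by
        intro C hC
        refine iSup_le fun α => ?_
        have hCeq : (C ∩ A) ∪ (C ∩ B) = C := by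
          rw [← Set.inter_union_distrib_left]
          exact Set.inter_eq_left.2 (hsubR C hC)
        have h1 : μ α C ≤ μ α (C ∩ A) + μ α (C ∩ B) := by
          calc μ α C = μ α ((C ∩ A) ∪ (C ∩ B)) := by rw [hCeq]
          _ ≤ μ α (C ∩ A) + μ α (C ∩ B) :=
            hsub α _ _ ((hRm C hC).inter hA) ((hRm C hC).inter hB)
              ((hAB.inter_left' C).inter_right' C)
        exact h1.trans (add_le_add (le_iSup (fun α => μ α (C ∩ A)) α)
          (le_iSup (fun α => μ α (C ∩ B)) α))
      -- the two image partitions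
      have himg : ∀ (T : Set S), MeasurableSet T → T ⊆ A ∪ B → ((A ∪ B) ∩ T = T) →
          cond ((A ∪ B) ∩ T) (R.image (· ∩ T)) ∧
            ∑ C ∈ R, f (C ∩ T) = ∑ D ∈ R.image (· ∩ T), f D := by
        intro T hT hTsub hTeq
        have hinj : ∀ C ∈ R, ∀ C' ∈ R, C ∩ T = C' ∩ T → C ∩ T ≠ ∅ → C = C' := by
          intro C hC C' hC' he hne
          by_contra hCC'
          have hd : Disjoint (C ∩ T) (C' ∩ T) :=
            (hRd hC hC' hCC').mono Set.inter_subset_left Set.inter_subset_left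
          rw [he, disjoint_self] at hd
          exact hne (he.trans hd)
        refine ⟨⟨?_, ?_, ?_⟩, sum_image_aux hf0 R _ hinj⟩
        · intro D hD
          obtain ⟨C, hC, rfl⟩ := Finset.mem_image.1 hD
          exact (hRm C hC).inter hT
        · intro D hD D' hD' hDD'
          simp only [Finset.coe_image, Set.mem_image] at hD hD'
          obtain ⟨C, hC, rfl⟩ := hD
          obtain ⟨C', hC', rfl⟩ := hD'
          have hCC' : C ≠ C' := by rintro rfl; exact hDD' rfl
          exact (hRd hC hC' hCC').mono Set.inter_subset_left Set.inter_subset_left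
        · rw [Finset.coe_image, Set.sUnion_image]
          calc ⋃ C ∈ (R : Set (Set S)), C ∩ T = (⋃₀ (R : Set (Set S))) ∩ T := by
                rw [Set.sUnion_eq_biUnion, Set.iUnion₂_inter]
          _ = (A ∪ B) ∩ T := by rw [hRu]
      obtain ⟨hcondA, hsumA⟩ := himg A hA Set.subset_union_left
        (Set.inter_eq_right.2 Set.subset_union_left)
      obtain ⟨hcondB, hsumB⟩ := himg B hB Set.subset_union_right
        (Set.inter_eq_right.2 Set.subset_union_right)
      rw [Set.inter_eq_right.2 Set.subset_union_left] at hcondA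
      rw [Set.inter_eq_right.2 Set.subset_union_right] at hcondB
      calc ∑ C ∈ R, f C ≤ ∑ C ∈ R, (f (C ∩ A) + f (C ∩ B)) := Finset.sum_le_sum hptwise
      _ = (∑ C ∈ R, f (C ∩ A)) + ∑ C ∈ R, f (C ∩ B) := Finset.sum_add_distrib
      _ = (∑ D ∈ R.image (· ∩ A), f D) + ∑ D ∈ R.image (· ∩ B), f D := by
            rw [hsumA, hsumB]
      _ ≤ partitionSup μ A + partitionSup μ B :=
            add_le_add (le_iSup₂ (f := fun P _ => ∑ C ∈ P, f C) _ hcondA)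
              (le_iSup₂ (f := fun P _ => ∑ C ∈ P, f C) _ hcondB)
    · -- ≥ : combine partitions of A and B
      have key : ∀ P Q : Finset (Set S), cond A P → cond B Q →
          (∑ C ∈ P, f C) + (∑ C ∈ Q, f C) ≤ partitionSup μ (A ∪ B) := by
        intro P Q ⟨hPm, hPd, hPu⟩ ⟨hQm, hQd, hQu⟩
        have hsubP : ∀ C ∈ P, C ⊆ A := fun C hC => hPu ▸ Set.subset_sUnion_of_mem hC
        have hsubQ : ∀ C ∈ Q, C ⊆ B := fun C hC => hQu ▸ Set.subset_sUnion_of_mem hC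
        have hcondU : cond (A ∪ B) (P ∪ Q) := by
          refine ⟨?_, ?_, ?_⟩
          · intro C hC
            rcases Finset.mem_union.1 hC with h | h
            · exact hPm C h
            · exact hQm C h
          · intro D hD D' hD' hDD'
            simp only [Finset.coe_union, Set.mem_union, Finset.mem_coe] at hD hD'
            rcases hD with h | h <;> rcases hD' with h' | h'
            · exact hPd h h' hDD'
            · exact (hAB.mono (hsubP D h) (hsubQ D' h'))
            · exact (hAB.mono (hsubP D' h') (hsubQ D h)).symm
            · exact hQd h h' hDD'
          · rw [Finset.coe_union, Set.sUnion_union, hPu, hQu]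
        have hinter : ∑ C ∈ P ∩ Q, f C = 0 := by
          refine Finset.sum_eq_zero fun C hC => ?_
          have hCA : C ⊆ A := hsubP C (Finset.mem_inter.1 hC).1
          have hCB : C ⊆ B := hsubQ C (Finset.mem_inter.1 hC).2
          have hC0 : C = ∅ := disjoint_self.1 (hAB.mono hCA hCB)
          rw [hC0]; exact hf0
        have hsum : (∑ C ∈ P, f C) + (∑ C ∈ Q, f C) = ∑ C ∈ P ∪ Q, f C := by
          rw [← Finset.sum_union_inter, hinter, add_zero]
        rw [hsum]
        exact le_iSup₂ (f := fun P _ => ∑ C ∈ P, f C) (P ∪ Q) hcondU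
      rw [hPS A, hPS B, iSup_subtype', iSup_subtype']
      haveI : Nonempty {P // cond A P} := ⟨⟨{A}, hsingle A hA⟩⟩
      haveI : Nonempty {Q // cond B Q} := ⟨⟨{B}, hsingle B hB⟩⟩
      exact ENNReal.iSup_add_iSup_le fun p q => key p.1 q.1 p.2 q.2
  · -- minimality
    intro ν hν0 hνadd hνdom A hA
    refine iSup₂_le ?_
    rintro P ⟨hPm, hPd, hPu⟩
    have h1 : ∑ C ∈ P, f C ≤ ∑ C ∈ P, ν C := by
      refine Finset.sum_le_sum fun C hC => ?_
      exact iSup_le fun α => hνdom α C (hPm C hC)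
    have h2 : ν (⋃₀ (P : Set (Set S))) = ∑ C ∈ P, ν C :=
      sum_partition_aux hν0 hνadd P hPm hPd
    rw [← hPu]
    exact h1.trans_eq h2.symm
end

section
/- Let (μ_α)_{α∈Λ} be a family of countably sub-additive, non-negative set functions on a measurable space (S,Σ). Then the set function μ̌(A) = sup over finite measurable partitions Π of A of Σ_{C∈Π} sup_{α∈Λ} μ_α(C) is countably additive, i.e. a measure on (S,Σ). -/
/-!
Write `ν C = ⨆ α, μ α C`. A supremum of countably subadditive set functions is countably
subadditive, and on measurable sets `partitionSup μ` is exactly Mathlib's `preVariationFun ν`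
(partitions may contain `∅`, which costs nothing since `ν ∅ = 0`). The pre-variation of a
σ-subadditive set function is countably additive (`preVariation.iUnion`): a finite partition of
`⋃ n, A n` is cut into the partitions `{C ∩ A n}` of the `A n`, and subadditivity of `ν` on each
piece `C = ⋃ n, C ∩ A n` bounds its contribution.
-/

open MeasureTheory Set Function
open scoped ENNReal NNReal

section

variable {S : Type*} [MeasurableSpace S] {Λ : Type*}

lemma isSigmaSubadditiveSetFun_iSup (μ : Λ → Set S → ℝ≥0∞)
    (hsub : ∀ α (A : ℕ → Set S), (∀ n, MeasurableSet (A n)) →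
      μ α (⋃ n, A n) ≤ ∑' n, μ α (A n)) :
    IsSigmaSubadditiveSetFun fun C => ⨆ α, μ α C := fun s _ =>
  iSup_le fun α => (hsub α _ fun n => (s n).2).trans <|
    ENNReal.tsum_le_tsum fun n => le_iSup (fun β => μ β (s n)) α

lemma partitionSup_le_preVariationFun (μ : Λ → Set S → ℝ≥0∞) (hempty : ∀ α, μ α ∅ = 0)
    (A : Set S) : partitionSup μ A ≤ preVariationFun (fun C => ⨆ α, μ α C) A := by
  refine iSup₂_le fun P ⟨hPm, hPd, hPA⟩ => ?_
  obtain rfl : P.sup id = A := by rw [Finset.sup_id_set_eq_sUnion, hPA]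
  have hA : MeasurableSet (P.sup id) := by
    rw [Finset.sup_id_set_eq_sUnion]
    exact .sUnion P.countable_toSet hPm
  rw [← Finpartition.sum_ofPairwiseDisjoint_eq_sum hPd (by simp [hempty])]
  exact preVariation.sum_le' _ hA _ fun C hC => hPm C (Finset.mem_of_mem_erase hC)

lemma preVariationFun_le_partitionSup (μ : Λ → Set S → ℝ≥0∞) {A : Set S}
    (hA : MeasurableSet A) : preVariationFun (fun C => ⨆ α, μ α C) A ≤ partitionSup μ A := by
  rw [preVariationFun_apply _ hA]
  refine iSup_le fun Q => ?_
  set P := Q.parts.map (Embedding.subtype MeasurableSet)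
  have hPm : ∀ C ∈ P, MeasurableSet C := fun _ hC => by
    obtain ⟨p, -, rfl⟩ := Finset.mem_map.mp hC
    exact p.2
  have hPd : (P : Set (Set S)).PairwiseDisjoint id := by
    rw [Finset.coe_map]
    refine Subtype.val_injective.injOn.pairwiseDisjoint_image.mpr fun p hp q hq hpq => ?_
    exact (disjoint_subtype_iff (pr := MeasurableSet) (fun _ _ => .inter) .empty).mp
      (Q.disjoint hp hq hpq)
  have hPA : ⋃₀ (P : Set (Set S)) = A := by
    rw [← Finset.sup_id_set_eq_sUnion, Finset.sup_map]
    calc _ = (Q.parts.sup id).val :=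
          (Finset.apply_sup_eq_sup_comp Subtype.val (fun _ _ => rfl) rfl).symm
      _ = A := congrArg Subtype.val Q.sup_parts
  calc ∑ p ∈ Q.parts, ⨆ α, μ α p = ∑ C ∈ P, ⨆ α, μ α C :=
      (Finset.sum_map Q.parts (Embedding.subtype MeasurableSet) fun C => ⨆ α, μ α C).symm
    _ ≤ partitionSup μ A :=
      le_iSup₂_of_le (f := fun P (_ : _ ∧ _ ∧ _) => ∑ C ∈ P, ⨆ α, μ α C) P ⟨hPm, hPd, hPA⟩ le_rfl

lemma partitionSup_eq_preVariationFun (μ : Λ → Set S → ℝ≥0∞) (hempty : ∀ α, μ α ∅ = 0)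
    {A : Set S} (hA : MeasurableSet A) :
    partitionSup μ A = preVariationFun (fun C => ⨆ α, μ α C) A :=
  (partitionSup_le_preVariationFun μ hempty A).antisymm (preVariationFun_le_partitionSup μ hA)

end

/-- If each member of a family of non-negative set functions `μ α` is countably
sub-additive (and vanishes on `∅`), then the supremum set function `partitionSup μ`
is countably additive on measurable sets, i.e. it is a measure on `(S, Σ)`. -/
theorem stmt1 {S : Type*} [MeasurableSpace S] {Λ : Type*} (μ : Λ → Set S → ℝ≥0∞)
    (hempty : ∀ α, μ α ∅ = 0)
    (hsub : ∀ α (A : ℕ → Set S), (∀ n, MeasurableSet (A n)) →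
      μ α (⋃ n, A n) ≤ ∑' n, μ α (A n)) :
    partitionSup μ ∅ = 0 ∧
    ∀ (A : ℕ → Set S), (∀ n, MeasurableSet (A n)) → Pairwise (Disjoint on A) →
      partitionSup μ (⋃ n, A n) = ∑' n, partitionSup μ (A n) := by
  have hν : (⨆ α, μ α ∅) = 0 := by simp [hempty]
  refine ⟨by rw [partitionSup_eq_preVariationFun μ hempty .empty, preVariation.empty],
    fun A hA hAd => ?_⟩
  have hsum := preVariation.iUnion (isSigmaSubadditiveSetFun_iSup μ hsub) hν A hA hAd
  rw [partitionSup_eq_preVariationFun μ hempty (.iUnion hA), ← hsum.tsum_eq]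
  exact tsum_congr fun n => (partitionSup_eq_preVariationFun μ hempty (hA n)).symm
end

section
/- Let (S,Σ,ν) be a measure space and F a family of measurable functions f: S → [0,∞] containing a sequence (f_j) with sup_{f∈F} f = sup_j f_j pointwise. For f ∈ F define μ_f(B) = ∫_B f dν. Then the supremum measure sup_{f∈F} μ_f equals the measure B ↦ ∫_B (sup_j f_j) dν. -/
open MeasureTheory Set Function
open scoped ENNReal NNReal

/-- Let `(S,Σ,ν)` be a measure space and `(f i)_{i : ι}` a family of measurable functions
`S → [0,∞]` containing a sequence `(f (j n))` whose pointwise supremum equals the supremum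
of the whole family.  For each `i` let `μ_i (B) = ∫_B f i dν`.  Then the supremum measure
`sup_i μ_i` equals the measure `B ↦ ∫_B (⨆ n, f (j n)) dν`. -/
theorem stmt4 {S : Type*} [MeasurableSpace S] {ι : Type*} (ν : Measure S)
    (f : ι → S → ℝ≥0∞) (hf : ∀ i, Measurable (f i)) (j : ℕ → ι)
    (hsup : ∀ x, (⨆ i, f i x) = ⨆ n, f (j n) x) :
    ∀ A : Set S, MeasurableSet A →
      partitionSup (fun i (B : Set S) => ∫⁻ x in B, f i x ∂ν) A
        = ∫⁻ x in A, (⨆ n, f (j n) x) ∂ν := by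
  classical
  intro A hA
  have hsup' : ∀ i x, f i x ≤ ⨆ n, f (j n) x := fun i x => by
    rw [← hsup x]; exact le_iSup (fun i => f i x) i
  -- the monotone approximating sequence
  set g : ℕ → S → ℝ≥0∞ := fun n x => ⨆ k ∈ Finset.range (n + 1), f (j k) x with hg
  have hgmeas : ∀ n, Measurable (g n) := fun n =>
    Measurable.iSup fun k => Measurable.iSup fun _ => hf _
  have hgmono : Monotone g := fun n m hnm x => by
    refine biSup_mono fun k hk => ?_
    simp only [Finset.mem_coe, Finset.mem_range] at *
    omega
  have hgsup : ∀ x, (⨆ n, g n x) = ⨆ n, f (j n) x := fun x => by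
    refine le_antisymm (iSup_le fun n => iSup₂_le fun k _ => le_iSup (fun n => f (j n) x) k) ?_
    refine iSup_le fun n => le_iSup_of_le n ?_
    exact le_iSup₂ (f := fun k (_ : k ∈ Finset.range (n + 1)) => f (j k) x) n
      (Finset.mem_range.2 (Nat.lt_succ_self n))
  refine le_antisymm ?_ ?_
  · -- upper bound
    refine iSup₂_le fun P hP => ?_
    obtain ⟨hm, hd, hu⟩ := hP
    calc ∑ C ∈ P, ⨆ α, ∫⁻ x in C, f α x ∂ν
        ≤ ∑ C ∈ P, ∫⁻ x in C, (⨆ n, f (j n) x) ∂ν :=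
          Finset.sum_le_sum fun C _ => iSup_le fun α => lintegral_mono fun x => hsup' α x
      _ = ∫⁻ x in ⋃ C ∈ P, id C, (⨆ n, f (j n) x) ∂ν :=
          (lintegral_biUnion_finset hd (fun C hC => hm C hC) _).symm
      _ = ∫⁻ x in A, (⨆ n, f (j n) x) ∂ν := by
          rw [show (⋃ C ∈ P, id C) = A by rw [← hu, Set.sUnion_eq_biUnion]; rfl]
  · -- lower bound
    have hint : ∫⁻ x in A, (⨆ n, f (j n) x) ∂ν = ⨆ n, ∫⁻ x in A, g n x ∂ν := by
      rw [show (fun x => ⨆ n, f (j n) x) = fun x => ⨆ n, g n x from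
        funext fun x => (hgsup x).symm]
      exact lintegral_iSup hgmeas hgmono
    rw [hint]
    refine iSup_le fun n => ?_
    -- build the partition for level n
    set B : ℕ → Set S := fun k => A ∩ {x | g n x ≤ f (j k) x} with hB
    have hBmeas : ∀ k, MeasurableSet (B k) :=
      fun k => hA.inter (measurableSet_le (hgmeas n) (hf _))
    set t : ℕ → Set S := fun k => disjointed B k with ht
    have htmeas : ∀ k, MeasurableSet (t k) := MeasurableSet.disjointed hBmeas
    have htdisj : Pairwise (Disjoint on t) := disjoint_disjointed B
    have htsub : ∀ k, t k ⊆ B k := disjointed_subset B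
    have hcover : (⋃ k ∈ Finset.range (n + 1), t k) = A := by
      have h1 : (⋃ k ∈ Finset.range (n + 1), t k) = ⋃ k ∈ Finset.range (n + 1), B k := by
        rw [← Finset.sup_set_eq_biUnion, ← Finset.sup_set_eq_biUnion,
          ← partialSups_eq_sup_range, ← partialSups_eq_sup_range, ht, partialSups_disjointed]
      rw [h1]
      apply Set.Subset.antisymm
      · exact Set.iUnion₂_subset fun k _ => Set.inter_subset_left
      · intro x hx
        obtain ⟨k, hk, hkx⟩ : ∃ k ∈ Finset.range (n + 1), g n x = f (j k) x := by
          have := Finset.exists_mem_eq_sup (Finset.range (n + 1))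
            ⟨0, Finset.mem_range.2 (Nat.succ_pos n)⟩ (fun k => f (j k) x)
          obtain ⟨k, hk, hkx⟩ := this
          exact ⟨k, hk, by rw [hg]; simp only [← Finset.sup_eq_iSup]; exact hkx⟩
        exact Set.mem_biUnion hk ⟨hx, le_of_eq hkx⟩
    set P : Finset (Set S) := Finset.image t (Finset.range (n + 1)) with hP
    have hPmeas : ∀ C ∈ P, MeasurableSet C := by
      intro C hC
      obtain ⟨k, _, rfl⟩ := Finset.mem_image.1 hC
      exact htmeas k
    have hPdisj : (P : Set (Set S)).PairwiseDisjoint id := by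
      intro C hC D hD hCD
      simp only [hP, Finset.coe_image, Set.mem_image] at hC hD
      obtain ⟨k, _, rfl⟩ := hC
      obtain ⟨l, _, rfl⟩ := hD
      exact htdisj (fun h => hCD (by rw [h]))
    have hPunion : ⋃₀ (P : Set (Set S)) = A := by
      rw [hP, Finset.coe_image, Set.sUnion_image, ← hcover]
      simp [Set.iUnion₂_congr]
    calc ∫⁻ x in A, g n x ∂ν
        = ∫⁻ x in ⋃ C ∈ P, id C, g n x ∂ν := by
          rw [show (⋃ C ∈ P, id C) = A by rw [← hPunion, Set.sUnion_eq_biUnion]; rfl]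
      _ = ∑ C ∈ P, ∫⁻ x in C, g n x ∂ν := lintegral_biUnion_finset hPdisj hPmeas _
      _ ≤ ∑ C ∈ P, ⨆ α, ∫⁻ x in C, f α x ∂ν := by
          refine Finset.sum_le_sum fun C hC => ?_
          obtain ⟨k, _, rfl⟩ := Finset.mem_image.1 hC
          refine le_iSup_of_le (j k) ?_
          refine setLIntegral_mono (hf (j k)) fun x hx => ?_
          exact (htsub k hx).2
      _ ≤ partitionSup (fun i (B : Set S) => ∫⁻ x in B, f i x ∂ν) A :=
          le_iSup₂ (f := fun (P : Finset (Set S)) (_ : (∀ C ∈ P, MeasurableSet C) ∧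
              (P : Set (Set S)).PairwiseDisjoint id ∧ ⋃₀ (P : Set (Set S)) = A) =>
            ∑ C ∈ P, ⨆ α, ∫⁻ x in C, f α x ∂ν) P ⟨hPmeas, hPdisj, hPunion⟩
end

section
/- Suppose the family of intensity measures (ν_{x*} : x* ∈ X*) of M satisfies: whenever x*_n → x* in the unit sphere of X*, sup_{A∈A} sup_{0≤s≤t} |ν_{x*_n}((s,t]×A) − ν_{x*}((s,t]×A)| → 0 in probability for every t > 0. Then the family satisfies the sequential boundedness property: for any dense sequence (x*_n) in the unit sphere and any x* with ‖x*‖=1, almost surely ν_{x*}((s,t]×A) ≤ sup_n ν_{x*_n}((s,t]×A) for all 0 ≤ s < t and A ∈ A. -/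
open MeasureTheory Set Function Filter
open scoped ENNReal NNReal Topology

/-!
Convergence in probability of the sup-differences along a sequence `x*ₙ → x*` yields, by
Borel–Cantelli, a subsequence along which they tend to `0` almost surely. On that event
`ν_{x*}(E) ≤ (ν_{x*}(E) - ν_{x*ₙ}(E)) + ν_{x*ₙ}(E)`, where the first term tends to `0` and the
second is bounded by `sup_n ν_{x*ₙ}(E)`. Density lets us take the approximating sequence among the
`x*ₙ` themselves.
-/

theorem ENNReal.exists_seq_tendsto_ae_zero {Ω : Type*} [MeasurableSpace Ω] {μ : Measure Ω}
    {f : ℕ → Ω → ℝ≥0∞}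
    (hf : ∀ ε : ℝ≥0∞, 0 < ε → Tendsto (fun n => μ {ω | ε ≤ f n ω}) atTop (𝓝 0)) :
    ∃ ns : ℕ → ℕ, StrictMono ns ∧ ∀ᵐ ω ∂μ, Tendsto (fun k => f (ns k) ω) atTop (𝓝 0) := by
  -- `ℝ≥0∞` is not a pseudo-emetric space, so we pass through the real-valued `min (f n) 1`.
  have hmin_ne_top (a : ℝ≥0∞) : min a 1 ≠ ∞ := (min_le_right a 1).trans_lt one_lt_top |>.ne
  set g : ℕ → Ω → ℝ := fun n ω => (min (f n ω) 1).toReal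
  have hedist (n : ℕ) (ω : Ω) : edist (g n ω) 0 = min (f n ω) 1 := by
    rw [edist_dist, Real.dist_eq, sub_zero, abs_of_nonneg ENNReal.toReal_nonneg,
      ENNReal.ofReal_toReal (hmin_ne_top _)]
  have hg : TendstoInMeasure μ g atTop 0 := fun ε hε =>
    tendsto_of_tendsto_of_tendsto_of_le_of_le tendsto_const_nhds (hf ε hε) (fun _ => zero_le)
      fun n => measure_mono fun ω hω => by
        have hω' : ε ≤ edist (g n ω) 0 := hω
        exact (le_min_iff.1 (hedist n ω ▸ hω')).1
  obtain ⟨ns, hns, hae⟩ := hg.exists_seq_tendsto_ae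
  refine ⟨ns, hns, hae.mono fun ω hω => ?_⟩
  have hmin : Tendsto (fun k => min (f (ns k) ω) 1) atTop (𝓝 0) :=
    (ENNReal.tendsto_toReal_iff (fun _ => hmin_ne_top _) zero_ne_top).1 (by simpa using hω)
  refine hmin.congr' ((hmin.eventually (gt_mem_nhds one_pos)).mono fun k hk => ?_)
  exact min_eq_left (min_lt_iff.1 hk |>.resolve_right (lt_irrefl 1)).le

theorem ENNReal.le_of_tendsto_tsub_of_le {a c : ℝ≥0∞} {b : ℕ → ℝ≥0∞} (hb : ∀ k, b k ≤ c)
    (h : Tendsto (fun k => a - b k) atTop (𝓝 0)) : a ≤ c :=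
  ge_of_tendsto' (by simpa using h.add_const c) fun k => le_tsub_add.trans (by gcongr; exact hb k)

theorem stmt15_general {X : Type*} [NormedAddCommGroup X] [NormedSpace ℝ X]
    {U Ω : Type*} [MeasurableSpace U] [MeasurableSpace Ω]
    (P : Measure Ω) (R : Set (Set U))
    (ν : StrongDual ℝ X → Ω → Measure (ℝ≥0 × U))
    (hconv : ∀ (x : StrongDual ℝ X) (xn : ℕ → StrongDual ℝ X),
      ‖x‖ = 1 → (∀ n, ‖xn n‖ = 1) → Tendsto xn atTop (𝓝 x) →
      ∀ t : ℝ≥0, 0 < t → ∀ ε : ℝ≥0∞, 0 < ε →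
        Tendsto (fun n => P {ω | ε ≤
            ⨆ (A : Set U) (_ : A ∈ R) (s : ℝ≥0) (_ : s ≤ t),
              ((ν (xn n) ω (Ioc s t ×ˢ A) - ν x ω (Ioc s t ×ˢ A)) +
                (ν x ω (Ioc s t ×ˢ A) - ν (xn n) ω (Ioc s t ×ˢ A)))})
          atTop (𝓝 0)) :
    ∀ (xn : ℕ → StrongDual ℝ X), (∀ n, ‖xn n‖ = 1) →
      {y : StrongDual ℝ X | ‖y‖ = 1} ⊆ closure (Set.range xn) →
      ∀ x : StrongDual ℝ X, ‖x‖ = 1 → ∀ t : ℝ≥0, 0 < t →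
        ∀ᵐ ω ∂P, ∀ s : ℝ≥0, s < t → ∀ A ∈ R,
          ν x ω (Ioc s t ×ˢ A) ≤ ⨆ n, ν (xn n) ω (Ioc s t ×ˢ A) := by
  intro xn hxn hdense x hx t ht
  obtain ⟨y, hy_range, hy_tendsto⟩ := mem_closure_iff_seq_limit.1 (hdense hx)
  choose idx hidx using hy_range
  obtain ⟨ns, -, hae⟩ := ENNReal.exists_seq_tendsto_ae_zero
    (hconv x y hx (fun n => hidx n ▸ hxn (idx n)) hy_tendsto t ht)
  filter_upwards [hae] with ω hω s hs A hA
  refine ENNReal.le_of_tendsto_tsub_of_le (b := fun k => ν (y (ns k)) ω (Ioc s t ×ˢ A))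
    (fun k => hidx (ns k) ▸ le_iSup (fun n => ν (xn n) ω (Ioc s t ×ˢ A)) (idx (ns k)))
    (tendsto_of_tendsto_of_tendsto_of_le_of_le tendsto_const_nhds hω (fun _ => zero_le) fun k => ?_)
  exact le_add_self.trans (le_iSup₂_of_le A hA (le_iSup₂_of_le s hs.le le_rfl))

/-- If the family of intensity measures `(ν x* : x* ∈ X*)` of a cylindrical orthogonal
martingale-valued measure satisfies: whenever `x*ₙ → x*` in the unit sphere of `X*`,
`sup_{A ∈ R} sup_{0 ≤ s ≤ t} |ν_{x*ₙ}((s,t] × A) − ν_{x*}((s,t] × A)| → 0` in probability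
for every `t > 0` (the absolute difference in `[0,∞]` being `(a − b) + (b − a)`), then the
family satisfies the sequential boundedness property: for any dense sequence `(x*ₙ)` in
the unit sphere and any `x*` with `‖x*‖ = 1` and `t > 0`, almost surely
`ν_{x*}((s,t] × A) ≤ sup_n ν_{x*ₙ}((s,t] × A)` for all `0 ≤ s < t` and `A ∈ R`. -/
theorem stmt15 {X : Type*} [NormedAddCommGroup X] [NormedSpace ℝ X]
    {U Ω : Type*} [MeasurableSpace U] [MeasurableSpace Ω]
    (P : Measure Ω) [IsProbabilityMeasure P] (R : Set (Set U))
    (ν : StrongDual ℝ X → Ω → Measure (ℝ≥0 × U))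
    (hconv : ∀ (x : StrongDual ℝ X) (xn : ℕ → StrongDual ℝ X),
      ‖x‖ = 1 → (∀ n, ‖xn n‖ = 1) → Tendsto xn atTop (𝓝 x) →
      ∀ t : ℝ≥0, 0 < t → ∀ ε : ℝ≥0∞, 0 < ε →
        Tendsto (fun n => P {ω | ε ≤
            ⨆ (A : Set U) (_ : A ∈ R) (s : ℝ≥0) (_ : s ≤ t),
              ((ν (xn n) ω (Ioc s t ×ˢ A) - ν x ω (Ioc s t ×ˢ A)) +
                (ν x ω (Ioc s t ×ˢ A) - ν (xn n) ω (Ioc s t ×ˢ A)))})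
          atTop (𝓝 0)) :
    ∀ (xn : ℕ → StrongDual ℝ X), (∀ n, ‖xn n‖ = 1) →
      {y : StrongDual ℝ X | ‖y‖ = 1} ⊆ closure (Set.range xn) →
      ∀ x : StrongDual ℝ X, ‖x‖ = 1 → ∀ t : ℝ≥0, 0 < t →
        ∀ᵐ ω ∂P, ∀ s : ℝ≥0, s < t → ∀ A ∈ R,
          ν x ω (Ioc s t ×ˢ A) ≤ ⨆ n, ν (xn n) ω (Ioc s t ×ˢ A) :=
  stmt15_general P R ν hconv
end
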